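/- The concatenation case of Lemma 2 (correctness of M_α): if (Π, i, j) ∈ R(α₁) and (Π, j, k) ∈ R(α₂) are witnessed by state sequences of lengths (j−i)/2 + 1 in M_{α₁} and (k−j)/2 + 1 in M_{α₂} satisfying conditions (i)–(iv), then gluing the sequences via the fresh ε-edge from q_{f,1} to q_{0,2} (dropping the duplicated initial state of the second sequence and merging the corresponding marking sets) yields a witnessing state sequence of length (k−i)/2 + 1 in M_{α₁·α₂}; conversely, every witnessing sequence in M_{α₁·α₂} splits uniquely at the unique crossing of the ε-edge (q_{f,1}, q_{0,2}) into witnessing sequences for α₁ and α₂. -/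

import Mathlib

/-- Programs of HyperPDL-Δ: regular expressions over tuples of atomic programs
(with `none` as the wildcard `·`) and tests drawn from a type `F` of formulas. -/
inductive Prog (P : Type) (F : Type) (n : ℕ) where
  | atom (t : Fin n → Option P) : Prog P F n
  | eps : Prog P F n
  | sum (a b : Prog P F n) : Prog P F n
  | seq (a b : Prog P F n) : Prog P F n
  | star (a : Prog P F n) : Prog P F n
  | test (ψ : F) : Prog P F n

/-- The size of a program: the number of operators and atomic symbols. -/
def Prog.size {P F : Type} {n : ℕ} : Prog P F n → ℕ
  | .atom _ => 1
  | .eps => 1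
  | .sum a b => a.size + b.size + 1
  | .seq a b => a.size + b.size + 1
  | .star a => a.size + 1
  | .test _ => 1

/-- The state space of the intermediate automaton `M_α`:
`τ` and `ε` contribute 2 states, a sum adds 2 fresh states to the disjoint union,
a concatenation is the disjoint union, a star adds 2 fresh states, a test has 3 states. -/
def Prog.St {P F : Type} {n : ℕ} : Prog P F n → Type
  | .atom _ => Fin 2
  | .eps => Fin 2
  | .sum a b => (a.St ⊕ b.St) ⊕ Fin 2
  | .seq a b => a.St ⊕ b.St
  | .star a => a.St ⊕ Fin 2
  | .test _ => Fin 3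

/-- The initial state of `M_α`. -/
def Prog.q0 {P F : Type} {n : ℕ} : (α : Prog P F n) → α.St
  | .atom _ => (0 : Fin 2)
  | .eps => (0 : Fin 2)
  | .sum _ _ => .inr 0
  | .seq a _ => .inl a.q0
  | .star _ => .inr 0
  | .test _ => (0 : Fin 3)

/-- The final state of `M_α`. -/
def Prog.qf {P F : Type} {n : ℕ} : (α : Prog P F n) → α.St
  | .atom _ => (1 : Fin 2)
  | .eps => (1 : Fin 2)
  | .sum _ _ => .inr 1
  | .seq _ b => .inr b.qf
  | .star _ => .inr 1
  | .test _ => (2 : Fin 3)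

/-- The letter-reading transitions of `M_α` over the alphabet `Σⁿ`. -/
def Prog.ρ {P F : Type} {n : ℕ} : (α : Prog P F n) → α.St → (Fin n → P) → Set α.St
  | .atom t, q, a => {q' | q = (0 : Fin 2) ∧ q' = (1 : Fin 2) ∧ ∀ l, t l = none ∨ t l = some (a l)}
  | .eps, _, _ => ∅
  | .sum c d, q, a =>
    match q with
    | .inl (.inl q) => (fun x => Sum.inl (Sum.inl x)) '' c.ρ q a
    | .inl (.inr q) => (fun x => Sum.inl (Sum.inr x)) '' d.ρ q a
    | .inr _ => ∅
  | .seq c d, q, a =>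
    match q with
    | .inl q => Sum.inl '' c.ρ q a
    | .inr q => Sum.inr '' d.ρ q a
  | .star c, q, a =>
    match q with
    | .inl q => Sum.inl '' c.ρ q a
    | .inr _ => ∅
  | .test _, _, _ => ∅

/-- The ε-transitions of `M_α` (including the backwards edges of star constructions). -/
def Prog.ρε {P F : Type} {n : ℕ} : (α : Prog P F n) → α.St → Set α.St
  | .atom _, _ => ∅
  | .eps, q => {q' | q = (0 : Fin 2) ∧ q' = (1 : Fin 2)}
  | .sum c d, q =>
    match q with
    | .inl (.inl q) => (fun x => Sum.inl (Sum.inl x)) '' c.ρε q ∪ {x | q = c.qf ∧ x = .inr 1}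
    | .inl (.inr q) => (fun x => Sum.inl (Sum.inr x)) '' d.ρε q ∪ {x | q = d.qf ∧ x = .inr 1}
    | .inr i => {x | i = 0 ∧ (x = .inl (.inl c.q0) ∨ x = .inl (.inr d.q0))}
  | .seq c d, q =>
    match q with
    | .inl q => Sum.inl '' c.ρε q ∪ {x | q = c.qf ∧ x = .inr d.q0}
    | .inr q => Sum.inr '' d.ρε q
  | .star c, q =>
    match q with
    | .inl q => Sum.inl '' c.ρε q ∪ {x | q = c.qf ∧ x = .inr 1}
    | .inr i => {x | (i = 0 ∧ (x = .inl c.q0 ∨ x = .inr 1)) ∨ (i = 1 ∧ x = .inr 0)}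
  | .test _, q => {q' | (q = (0 : Fin 3) ∧ q' = (1 : Fin 3)) ∨ (q = (1 : Fin 3) ∧ q' = (2 : Fin 3))}

/-- The ε-transitions of `M_α` with all backwards edges of star constructions removed. -/
def Prog.ρεNB {P F : Type} {n : ℕ} : (α : Prog P F n) → α.St → Set α.St
  | .atom _, _ => ∅
  | .eps, q => {q' | q = (0 : Fin 2) ∧ q' = (1 : Fin 2)}
  | .sum c d, q =>
    match q with
    | .inl (.inl q) => (fun x => Sum.inl (Sum.inl x)) '' c.ρεNB q ∪ {x | q = c.qf ∧ x = .inr 1}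
    | .inl (.inr q) => (fun x => Sum.inl (Sum.inr x)) '' d.ρεNB q ∪ {x | q = d.qf ∧ x = .inr 1}
    | .inr i => {x | i = 0 ∧ (x = .inl (.inl c.q0) ∨ x = .inl (.inr d.q0))}
  | .seq c d, q =>
    match q with
    | .inl q => Sum.inl '' c.ρεNB q ∪ {x | q = c.qf ∧ x = .inr d.q0}
    | .inr q => Sum.inr '' d.ρεNB q
  | .star c, q =>
    match q with
    | .inl q => Sum.inl '' c.ρεNB q ∪ {x | q = c.qf ∧ x = .inr 1}
    | .inr i => {x | i = 0 ∧ (x = .inl c.q0 ∨ x = .inr 1)}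
  | .test _, q => {q' | (q = (0 : Fin 3) ∧ q' = (1 : Fin 3)) ∨ (q = (1 : Fin 3) ∧ q' = (2 : Fin 3))}

/-- The state-marking function `Ψ` of `M_α`: the middle state of each test `ψ?` is marked
with `ψ`; all other states are unmarked. -/
def Prog.mark {P F : Type} {n : ℕ} : (α : Prog P F n) → α.St → Set F
  | .atom _, _ => ∅
  | .eps, _ => ∅
  | .sum c d, q =>
    match q with
    | .inl (.inl q) => c.mark q
    | .inl (.inr q) => d.mark q
    | .inr _ => ∅
  | .seq c d, q =>
    match q with
    | .inl q => c.mark q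
    | .inr q => d.mark q
  | .star c, q =>
    match q with
    | .inl q => c.mark q
    | .inr _ => ∅
  | .test ψ, q => {x | q = (1 : Fin 3) ∧ x = ψ}

/-- The state space of `M_α` is finite. -/
def Prog.finSt {P F : Type} {n : ℕ} : (α : Prog P F n) → Fintype α.St
  | .atom _ => inferInstanceAs (Fintype (Fin 2))
  | .eps => inferInstanceAs (Fintype (Fin 2))
  | .sum a b => letI := a.finSt; letI := b.finSt; inferInstanceAs (Fintype ((a.St ⊕ b.St) ⊕ Fin 2))
  | .seq a b => letI := a.finSt; letI := b.finSt; inferInstanceAs (Fintype (a.St ⊕ b.St))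
  | .star a => letI := a.finSt; inferInstanceAs (Fintype (a.St ⊕ Fin 2))
  | .test _ => inferInstanceAs (Fintype (Fin 3))

/-- Marked ε-reachability: `EpsReach ρε Ψ q X q'` holds iff there is an ε-path from `q`
to `q'` collecting exactly the markings in `X`. -/
inductive EpsReach {Q F : Type} (ρε : Q → Set Q) (Ψ : Q → Set F) : Q → Set F → Q → Prop
  | refl (q : Q) : EpsReach ρε Ψ q (Ψ q) q
  | step {q q' q'' : Q} {X : Set F} :
      q' ∈ ρε q → EpsReach ρε Ψ q' X q'' → EpsReach ρε Ψ q (X ∪ Ψ q) q''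

/-- Marked `τ`-reachability: an ε-path collecting markings `X` followed by one letter step. -/
def TauReach {Q A F : Type} (ρ : Q → A → Set Q) (ρε : Q → Set Q) (Ψ : Q → Set F)
    (q : Q) (a : A) (X : Set F) (q'' : Q) : Prop :=
  ∃ q', EpsReach ρε Ψ q X q' ∧ q'' ∈ ρ q' a

/-- An infinite alternating path/trace: `st j` is the element at (paper) position `2j`,
`pr j` the atomic program at (paper) position `2j+1`. -/
structure HPath (S P : Type) where
  st : ℕ → S
  pr : ℕ → P

/-- The suffix `p[2j, ∞]` of a path. -/
def HPath.drop {S P : Type} (p : HPath S P) (j : ℕ) : HPath S P :=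
  ⟨fun m => p.st (j + m), fun m => p.pr (j + m)⟩

/-- The shifted path assignment `Pa[2j, ∞]`. -/
def PAdrop {S P : Type} {n : ℕ} (Pa : Fin n → HPath S P) (j : ℕ) : Fin n → HPath S P :=
  fun l => (Pa l).drop j

/-- The program satisfaction relation `(Pa, i, k) ∈ R(α)` of HyperPDL-Δ (for even indices
`i ≤ k`), relative to a satisfaction predicate `sat` for the test formulas:
`sat ψ Pa'` means `Pa' ⊨_T ψ`. -/
def Match {S P F : Type} {n : ℕ} (sat : F → (Fin n → HPath S P) → Prop) :
    Prog P F n → (Fin n → HPath S P) → ℕ → ℕ → Prop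
  | .atom t, Pa, i, k => k = i + 2 ∧ ∀ l, t l = none ∨ t l = some ((Pa l).pr (i / 2))
  | .eps, _, i, k => i = k
  | .sum a b, Pa, i, k => Match sat a Pa i k ∨ Match sat b Pa i k
  | .seq a b, Pa, i, k => ∃ j, i ≤ j ∧ j ≤ k ∧ Match sat a Pa i j ∧ Match sat b Pa j k
  | .star a, Pa, i, k => ∃ (m : ℕ) (js : Fin (m + 1) → ℕ), js 0 = i ∧ js (Fin.last m) = k ∧
      ∀ l : Fin m, js l.castSucc ≤ js l.succ ∧ Match sat a Pa (js l.castSucc) (js l.succ)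
  | .test ψ, Pa, i, k => i = k ∧ sat ψ (PAdrop Pa (i / 2))

/-- The witnessing condition of Lemma 2: a state sequence `q₀ … q_m` in `M_α` with
`m = (k - i)/2` and marking sets `X₀ … X_m` such that (i) `q₀` is initial, (ii) the last
state ε-reaches the final state collecting `X_m`, (iii) consecutive states are
`τ`-reachable via the letters of `ν(Pa)` collecting the `X_l`, and (iv) every formula in
`X_l` holds at the corresponding suffix of `Pa`. -/
def Witness {S P F : Type} {n : ℕ} (sat : F → (Fin n → HPath S P) → Prop)
    (α : Prog P F n) (Pa : Fin n → HPath S P) (i k : ℕ) : Prop :=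
  ∃ (q : Fin ((k - i) / 2 + 1) → α.St) (X : Fin ((k - i) / 2 + 1) → Set F),
    q 0 = α.q0 ∧
    EpsReach α.ρε α.mark (q (Fin.last _)) (X (Fin.last _)) α.qf ∧
    (∀ l : Fin ((k - i) / 2),
      TauReach α.ρ α.ρε α.mark (q l.castSucc) (fun m => (Pa m).pr (i / 2 + l))
        (X l.castSucc) (q l.succ)) ∧
    (∀ l : Fin ((k - i) / 2 + 1), ∀ ψ ∈ X l, sat ψ (PAdrop Pa (i / 2 + l)))

section Helpers

variable {Q A F : Type} {ρε : Q → Set Q} {Ψ : Q → Set F}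

theorem EpsReach.mark_subset {q X q'} (h : EpsReach ρε Ψ q X q') : Ψ q ⊆ X := by
  cases h with
  | refl => exact subset_rfl
  | step _ _ => exact Set.subset_union_right

theorem EpsReach.congr_set {q X q' Y} (h : EpsReach ρε Ψ q X q') (hXY : X = Y) :
    EpsReach ρε Ψ q Y q' := hXY ▸ h

theorem EpsReach.trans {q q' q'' X Y} (h1 : EpsReach ρε Ψ q X q')
    (h2 : EpsReach ρε Ψ q' Y q'') : EpsReach ρε Ψ q (X ∪ Y) q'' := by
  induction h1 with
  | refl q => rwa [Set.union_eq_self_of_subset_left h2.mark_subset]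
  | step h ha ih =>
    exact (EpsReach.step h (ih h2)).congr_set (Set.union_right_comm _ _ _)

theorem EpsReach.map {Q' : Type} {ρε' : Q' → Set Q'} {Ψ' : Q' → Set F} (f : Q → Q')
    (hρ : ∀ q q', q' ∈ ρε q → f q' ∈ ρε' (f q)) (hΨ : ∀ q, Ψ' (f q) = Ψ q)
    {q X q'} (h : EpsReach ρε Ψ q X q') : EpsReach ρε' Ψ' (f q) X (f q') := by
  induction h with
  | refl q => exact (EpsReach.refl (f q)).congr_set (hΨ q)
  | step h ha ih =>
    exact (EpsReach.step (hρ _ _ h) ih).congr_set (by rw [hΨ])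

theorem TauReach.map {Q' : Type} {ρ : Q → A → Set Q} {ρ' : Q' → A → Set Q'}
    {ρε' : Q' → Set Q'} {Ψ' : Q' → Set F} (f : Q → Q')
    (hρl : ∀ q a q', q' ∈ ρ q a → f q' ∈ ρ' (f q) a)
    (hρ : ∀ q q', q' ∈ ρε q → f q' ∈ ρε' (f q)) (hΨ : ∀ q, Ψ' (f q) = Ψ q)
    {q a X q'} (h : TauReach ρ ρε Ψ q a X q') : TauReach ρ' ρε' Ψ' (f q) a X (f q') := by
  obtain ⟨p, h1, h2⟩ := h
  exact ⟨f p, h1.map f hρ hΨ, hρl _ _ _ h2⟩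

end Helpers

section Seq

variable {P F : Type} {n : ℕ} {a b : Prog P F n}

theorem epsReach_seq_inl_of {q : a.St} {X q'} (h : EpsReach a.ρε a.mark q X q') :
    EpsReach (a.seq b).ρε (a.seq b).mark (.inl q) X (.inl q') :=
  h.map Sum.inl (fun q q' hq => Or.inl (Set.mem_image_of_mem _ hq)) (fun _ => rfl)

theorem epsReach_seq_inr_of {q : b.St} {X q'} (h : EpsReach b.ρε b.mark q X q') :
    EpsReach (a.seq b).ρε (a.seq b).mark (.inr q) X (.inr q') :=
  h.map Sum.inr (fun q q' hq => Set.mem_image_of_mem _ hq) (fun _ => rfl)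

theorem epsReach_seq_inr {q : b.St} {X} {q'' : (a.seq b).St}
    (h : EpsReach (a.seq b).ρε (a.seq b).mark (.inr q) X q'') :
    ∃ r, q'' = .inr r ∧ EpsReach b.ρε b.mark q X r := by
  generalize hs : (Sum.inr q : a.St ⊕ b.St) = s at h
  induction h generalizing q with
  | refl s => exact ⟨q, hs.symm, by subst hs; exact .refl q⟩
  | step h1 h2 ih =>
    subst hs
    obtain ⟨p, hp, rfl⟩ := h1
    obtain ⟨r, rfl, hr⟩ := ih rfl
    exact ⟨r, rfl, .step hp hr⟩

theorem epsReach_seq_inl {q : a.St} {X} {q'' : (a.seq b).St}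
    (h : EpsReach (a.seq b).ρε (a.seq b).mark (.inl q) X q'') :
    (∃ r, q'' = .inl r ∧ EpsReach a.ρε a.mark q X r) ∨
    (∃ r X1 X2, q'' = .inr r ∧ X = X1 ∪ X2 ∧ EpsReach a.ρε a.mark q X1 a.qf ∧
      EpsReach b.ρε b.mark b.q0 X2 r) := by
  generalize hs : (Sum.inl q : a.St ⊕ b.St) = s at h
  induction h generalizing q with
  | refl s => exact Or.inl ⟨q, hs.symm, by subst hs; exact .refl q⟩
  | step h1 h2 ih =>
    subst hs
    rcases h1 with ⟨p, hp, rfl⟩ | ⟨rfl, rfl⟩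
    · rcases ih rfl with ⟨r, rfl, hr⟩ | ⟨r, X1, X2, rfl, rfl, h1, h2⟩
      · exact Or.inl ⟨r, rfl, .step hp hr⟩
      · exact Or.inr ⟨r, X1 ∪ a.mark q, X2, rfl, Set.union_right_comm _ _ _,
          .step hp h1, h2⟩
    · obtain ⟨r, rfl, hr⟩ := epsReach_seq_inr h2
      exact Or.inr ⟨r, a.mark a.qf, _, rfl, Set.union_comm _ _, .refl _, hr⟩

theorem tauReach_seq_inr {q : b.St} {ltr X} {q'' : (a.seq b).St}
    (h : TauReach (a.seq b).ρ (a.seq b).ρε (a.seq b).mark (.inr q) ltr X q'') :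
    ∃ r, q'' = .inr r ∧ TauReach b.ρ b.ρε b.mark q ltr X r := by
  obtain ⟨p, h1, h2⟩ := h
  obtain ⟨p', rfl, hp⟩ := epsReach_seq_inr h1
  obtain ⟨r, hr, rfl⟩ := h2
  exact ⟨r, rfl, p', hp, hr⟩

theorem tauReach_seq_inl {q : a.St} {ltr X} {q'' : (a.seq b).St}
    (h : TauReach (a.seq b).ρ (a.seq b).ρε (a.seq b).mark (.inl q) ltr X q'') :
    (∃ r, q'' = .inl r ∧ TauReach a.ρ a.ρε a.mark q ltr X r) ∨
    (∃ r X1 X2, q'' = .inr r ∧ X = X1 ∪ X2 ∧ EpsReach a.ρε a.mark q X1 a.qf ∧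
      TauReach b.ρ b.ρε b.mark b.q0 ltr X2 r) := by
  obtain ⟨p, h1, h2⟩ := h
  rcases epsReach_seq_inl h1 with ⟨p', rfl, hp⟩ | ⟨p', X1, X2, rfl, rfl, ha, hb⟩
  · obtain ⟨r, hr, rfl⟩ := h2
    exact Or.inl ⟨r, rfl, p', hp, hr⟩
  · obtain ⟨r, hr, rfl⟩ := h2
    exact Or.inr ⟨r, X1, X2, rfl, rfl, ha, p', hb, hr⟩

end Seq

theorem EpsReach.mark_end_subset {Q F : Type} {ρε : Q → Set Q} {Ψ : Q → Set F} {q X q'}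
    (h : EpsReach ρε Ψ q X q') : Ψ q' ⊆ X := by
  induction h with
  | refl => exact subset_rfl
  | step _ _ ih => exact ih.trans Set.subset_union_left

theorem EpsReach.congr {Q F : Type} {ρε : Q → Set Q} {Ψ : Q → Set F} {q₁ q₂ q₁' q₂' : Q}
    {X₁ X₂ : Set F} (h : EpsReach ρε Ψ q₁ X₁ q₁') (e1 : q₁ = q₂) (e2 : X₁ = X₂)
    (e3 : q₁' = q₂') : EpsReach ρε Ψ q₂ X₂ q₂' := e1 ▸ e2 ▸ e3 ▸ h

theorem TauReach.congr {Q A F : Type} {ρ : Q → A → Set Q} {ρε : Q → Set Q} {Ψ : Q → Set F}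
    {q₁ q₂ q₁' q₂' : Q} {a₁ a₂ : A} {X₁ X₂ : Set F}
    (h : TauReach ρ ρε Ψ q₁ a₁ X₁ q₁') (e1 : q₁ = q₂) (ea : a₁ = a₂) (e2 : X₁ = X₂)
    (e3 : q₁' = q₂') : TauReach ρ ρε Ψ q₂ a₂ X₂ q₂' := e1 ▸ ea ▸ e2 ▸ e3 ▸ h

theorem union_absorb {α : Type} {X Y Z : Set α} (h : Z ⊆ X) : X ∪ (Y ∪ Z) = X ∪ Y := by
  ext x
  have := @h x
  simp only [Set.mem_union] at *
  tauto

theorem tauReach_seq_inl_of {P F : Type} {n : ℕ} {a b : Prog P F n} {q : a.St}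
    {ltr X q'} (h : TauReach a.ρ a.ρε a.mark q ltr X q') :
    TauReach (a.seq b).ρ (a.seq b).ρε (a.seq b).mark (.inl q) ltr X (.inl q') :=
  h.map (ρ' := (a.seq b).ρ) (ρε' := (a.seq b).ρε) (Ψ' := (a.seq b).mark) Sum.inl
    (fun _ _ _ hq => Set.mem_image_of_mem _ hq)
    (fun _ _ hq => Or.inl (Set.mem_image_of_mem _ hq)) (fun _ => rfl)

theorem tauReach_seq_inr_of {P F : Type} {n : ℕ} {a b : Prog P F n} {q : b.St}
    {ltr X q'} (h : TauReach b.ρ b.ρε b.mark q ltr X q') :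
    TauReach (a.seq b).ρ (a.seq b).ρε (a.seq b).mark (.inr q) ltr X (.inr q') :=
  h.map (ρ' := (a.seq b).ρ) (ρε' := (a.seq b).ρε) (Ψ' := (a.seq b).mark) Sum.inr
    (fun _ _ _ hq => Set.mem_image_of_mem _ hq)
    (fun _ _ hq => Set.mem_image_of_mem _ hq) (fun _ => rfl)

theorem witness_seq_fwd {S P F : Type} {n : ℕ}
    (sat : F → (Fin n → HPath S P) → Prop) (a b : Prog P F n)
    (Pa : Fin n → HPath S P) (i k : ℕ) (hi : Even i) (hk : Even k) (hik : i ≤ k)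
    (j : ℕ) (hj : Even j) (hij : i ≤ j) (hjk : j ≤ k)
    (wa : Witness sat a Pa i j) (wb : Witness sat b Pa j k) :
    Witness sat (a.seq b) Pa i k := by
  obtain ⟨qa, Xa, ha0, haf, hat, has⟩ := wa
  obtain ⟨qb, Xb, hb0, hbf, hbt, hbs⟩ := wb
  have hi2 := Nat.even_iff.mp hi
  have hk2 := Nat.even_iff.mp hk
  have hj2 := Nat.even_iff.mp hj
  have hm : (k - i) / 2 = (j - i) / 2 + (k - j) / 2 := by omega
  refine ⟨(fun l => if h : (l : ℕ) ≤ (j - i) / 2 then .inl (qa ⟨(l : ℕ), by omega⟩)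
      else .inr (qb ⟨(l : ℕ) - (j - i) / 2, by have := l.isLt; omega⟩) :
        Fin ((k - i) / 2 + 1) → a.St ⊕ b.St),
    fun l => if h : (l : ℕ) < (j - i) / 2 then Xa ⟨(l : ℕ), by omega⟩
      else if h2 : (l : ℕ) = (j - i) / 2 then Xa (Fin.last _) ∪ Xb 0
      else Xb ⟨(l : ℕ) - (j - i) / 2, by have := l.isLt; omega⟩, ?_, ?_, ?_, ?_⟩
  all_goals beta_reduce
  · have c1 : ((0 : Fin ((k - i) / 2 + 1)) : ℕ) ≤ (j - i) / 2 := by simp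
    rw [dif_pos c1]
    have e : (⟨((0 : Fin ((k - i) / 2 + 1)) : ℕ), by omega⟩ : Fin ((j - i) / 2 + 1)) = 0 :=
      Fin.ext (by simp)
    rw [e, ha0]
    rfl
  · -- final eps reach
    by_cases hm2 : (k - j) / 2 = 0
    · have c1 : ((Fin.last ((k - i) / 2) : Fin _) : ℕ) ≤ (j - i) / 2 := by
        simp only [Fin.val_last]; omega
      have c2 : ¬ ((Fin.last ((k - i) / 2) : Fin _) : ℕ) < (j - i) / 2 := by
        simp only [Fin.val_last]; omega
      have c3 : ((Fin.last ((k - i) / 2) : Fin _) : ℕ) = (j - i) / 2 := by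
        simp only [Fin.val_last]; omega
      rw [dif_pos c1, dif_neg c2, dif_pos c3]
      have e : (⟨((Fin.last ((k - i) / 2) : Fin _) : ℕ), by omega⟩ : Fin ((j - i) / 2 + 1)) =
          Fin.last _ := Fin.ext (by simp only [Fin.val_last]; omega)
      rw [e]
      have hbl : (Fin.last ((k - j) / 2)) = (0 : Fin ((k - j) / 2 + 1)) :=
        Fin.ext (by simp only [Fin.val_last, Fin.val_zero]; omega)
      rw [hbl] at hbf
      have e2 : EpsReach (a.seq b).ρε (a.seq b).mark (.inl a.qf) (Xb 0 ∪ a.mark a.qf)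
          (.inr b.qf) := by
        refine EpsReach.step (q' := Sum.inr b.q0) (Or.inr ⟨rfl, rfl⟩) ?_
        exact (epsReach_seq_inr_of hbf).congr (congrArg Sum.inr hb0) rfl rfl
      exact ((epsReach_seq_inl_of haf).trans e2).congr rfl
        (union_absorb haf.mark_end_subset) rfl
    · have c1 : ¬ ((Fin.last ((k - i) / 2) : Fin _) : ℕ) ≤ (j - i) / 2 := by
        simp only [Fin.val_last]; omega
      have c2 : ¬ ((Fin.last ((k - i) / 2) : Fin _) : ℕ) < (j - i) / 2 := by
        simp only [Fin.val_last]; omega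
      have c3 : ¬ ((Fin.last ((k - i) / 2) : Fin _) : ℕ) = (j - i) / 2 := by
        simp only [Fin.val_last]; omega
      rw [dif_neg c1, dif_neg c2, dif_neg c3]
      refine (epsReach_seq_inr_of hbf).congr ?_ ?_ rfl
      · exact congrArg _ (congrArg qb (Fin.ext (by
          simp only [Fin.val_last]; omega)))
      · exact congrArg Xb (Fin.ext (by simp only [Fin.val_last]; omega))
  · -- tau steps
    intro l
    rcases lt_trichotomy (l : ℕ) ((j - i) / 2) with hl | hl | hl
    · have c1 : ((l.castSucc : Fin _) : ℕ) ≤ (j - i) / 2 := by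
        simp only [Fin.coe_castSucc]; omega
      have c2 : ((l.castSucc : Fin _) : ℕ) < (j - i) / 2 := by
        simp only [Fin.coe_castSucc]; omega
      have c3 : ((l.succ : Fin _) : ℕ) ≤ (j - i) / 2 := by
        simp only [Fin.val_succ]; omega
      rw [dif_pos c1, dif_pos c2, dif_pos c3]
      have hl' : (l : ℕ) < (j - i) / 2 := hl
      refine (tauReach_seq_inl_of (hat ⟨(l : ℕ), hl'⟩)).congr ?_ rfl ?_ ?_
      · exact congrArg _ (congrArg qa (Fin.ext (by simp)))
      · exact congrArg Xa (Fin.ext (by simp))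
      · exact congrArg _ (congrArg qa (Fin.ext (by simp)))
    · have c1 : ((l.castSucc : Fin _) : ℕ) ≤ (j - i) / 2 := by
        simp only [Fin.coe_castSucc]; omega
      have c2 : ¬ ((l.castSucc : Fin _) : ℕ) < (j - i) / 2 := by
        simp only [Fin.coe_castSucc]; omega
      have c3 : ((l.castSucc : Fin _) : ℕ) = (j - i) / 2 := by
        simp only [Fin.coe_castSucc]; omega
      have c4 : ¬ ((l.succ : Fin _) : ℕ) ≤ (j - i) / 2 := by
        simp only [Fin.val_succ]; omega
      rw [dif_pos c1, dif_neg c2, dif_pos c3, dif_neg c4]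
      have hm2 : 0 < (k - j) / 2 := by have := l.isLt; omega
      obtain ⟨p, hb1, hb2⟩ := hbt ⟨0, hm2⟩
      have hb1' : EpsReach b.ρε b.mark b.q0 (Xb 0) p := by
        refine hb1.congr ?_ ?_ rfl
        · rw [show ((⟨0, hm2⟩ : Fin ((k - j) / 2)).castSucc) = 0 from Fin.ext (by simp)]
          exact hb0
        · exact congrArg Xb (Fin.ext (by simp))
      refine ⟨.inr p, ?_, ?_⟩
      · have e : (⟨((l.castSucc : Fin _) : ℕ), by omega⟩ : Fin ((j - i) / 2 + 1)) =
            Fin.last _ := Fin.ext (by simp only [Fin.coe_castSucc, Fin.val_last]; omega)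
        rw [e]
        have e2 : EpsReach (a.seq b).ρε (a.seq b).mark (.inl a.qf)
            (Xb 0 ∪ a.mark a.qf) (.inr p) :=
          EpsReach.step (Or.inr ⟨rfl, rfl⟩) (epsReach_seq_inr_of hb1')
        exact ((epsReach_seq_inl_of haf).trans e2).congr rfl
          (union_absorb haf.mark_end_subset) rfl
      · refine Set.mem_image_of_mem Sum.inr ?_
        have e : qb (⟨0, hm2⟩ : Fin ((k - j) / 2)).succ =
            qb ⟨((l.succ : Fin _) : ℕ) - (j - i) / 2, by have := l.isLt; omega⟩ :=
          congrArg qb (Fin.ext (by simp only [Fin.val_succ, Fin.val_mk]; omega))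
        have eltr : (fun m => (Pa m).pr (j / 2 + ((⟨0, hm2⟩ : Fin ((k - j) / 2)) : ℕ))) =
            (fun m => (Pa m).pr (i / 2 + (l : ℕ))) := by
          have : j / 2 + ((⟨0, hm2⟩ : Fin ((k - j) / 2)) : ℕ) = i / 2 + (l : ℕ) := by
            simp only [Fin.val_mk]; omega
          rw [this]
        rw [← e, ← eltr]
        exact hb2
    · have c1 : ¬ ((l.castSucc : Fin _) : ℕ) ≤ (j - i) / 2 := by
        simp only [Fin.coe_castSucc]; omega
      have c2 : ¬ ((l.castSucc : Fin _) : ℕ) < (j - i) / 2 := by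
        simp only [Fin.coe_castSucc]; omega
      have c3 : ¬ ((l.castSucc : Fin _) : ℕ) = (j - i) / 2 := by
        simp only [Fin.coe_castSucc]; omega
      have c4 : ¬ ((l.succ : Fin _) : ℕ) ≤ (j - i) / 2 := by
        simp only [Fin.val_succ]; omega
      rw [dif_neg c1, dif_neg c2, dif_neg c3, dif_neg c4]
      have hlB : (l : ℕ) - (j - i) / 2 < (k - j) / 2 := by have := l.isLt; omega
      refine (tauReach_seq_inr_of (hbt ⟨(l : ℕ) - (j - i) / 2, hlB⟩)).congr ?_ ?_ ?_ ?_
      · exact congrArg _ (congrArg qb (Fin.ext (by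
          simp only [Fin.coe_castSucc, Fin.val_mk] <;> omega)))
      · have : j / 2 + (((⟨(l : ℕ) - (j - i) / 2, hlB⟩ : Fin ((k - j) / 2))) : ℕ) =
            i / 2 + (l : ℕ) := by simp only [Fin.val_mk]; omega
        rw [this]
      · exact congrArg Xb (Fin.ext (by
          simp only [Fin.coe_castSucc, Fin.val_mk] <;> omega))
      · exact congrArg _ (congrArg qb (Fin.ext (by
          simp only [Fin.val_succ, Fin.val_mk]; omega)))
  · -- sat
    intro l ψ hψ
    rcases lt_trichotomy (l : ℕ) ((j - i) / 2) with hl | hl | hl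
    · rw [dif_pos hl] at hψ
      exact has _ ψ hψ
    · rw [dif_neg (by omega), dif_pos hl] at hψ
      rcases hψ with hψ | hψ
      · have e : i / 2 + (l : ℕ) = i / 2 + ((Fin.last ((j - i) / 2) : Fin _) : ℕ) := by
          simp only [Fin.val_last]; omega
        rw [e]
        exact has (Fin.last _) ψ hψ
      · have e : i / 2 + (l : ℕ) = j / 2 + ((0 : Fin ((k - j) / 2 + 1)) : ℕ) := by
          simp only [Fin.val_zero]; omega
        rw [e]
        exact hbs 0 ψ hψ
    · rw [dif_neg (by omega), dif_neg (by omega)] at hψ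
      have e : i / 2 + (l : ℕ) = j / 2 +
          ((⟨(l : ℕ) - (j - i) / 2, by have := l.isLt; omega⟩ :
            Fin ((k - j) / 2 + 1)) : ℕ) := by
        simp only [Fin.val_mk]; omega
      rw [e]
      exact hbs _ ψ hψ

set_option maxHeartbeats 2000000 in
theorem witness_seq_bwd {S P F : Type} {n : ℕ}
    (sat : F → (Fin n → HPath S P) → Prop) (a b : Prog P F n)
    (Pa : Fin n → HPath S P) (i k : ℕ) (hi : Even i) (hk : Even k) (hik : i ≤ k)
    (w : Witness sat (a.seq b) Pa i k) :
    ∃ j, Even j ∧ i ≤ j ∧ j ≤ k ∧ Witness sat a Pa i j ∧ Witness sat b Pa j k := by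
  classical
  obtain ⟨q, X, h0, hf, ht, hs⟩ := w
  have hi2 := Nat.even_iff.mp hi
  have hk2 := Nat.even_iff.mp hk
  by_cases hex : ∃ s : ℕ, ∃ h : s < (k - i) / 2 + 1, ∃ r, q ⟨s, h⟩ = .inr r
  · -- the sequence crosses into the second component at step t
    obtain ⟨t, ⟨htlt, rt, hqt⟩, hmin⟩ :
        ∃ t, (∃ h : t < (k - i) / 2 + 1, ∃ r, q ⟨t, h⟩ = .inr r) ∧
          ∀ s, s < t → ¬ ∃ h : s < (k - i) / 2 + 1, ∃ r, q ⟨s, h⟩ = .inr r :=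
      ⟨Nat.find hex, Nat.find_spec hex, fun s hst => Nat.find_min hex hst⟩
    have hinl : ∀ s (h : s < (k - i) / 2 + 1), s < t → ∃ r, q ⟨s, h⟩ = .inl r := by
      intro s h hst
      rcases hq : q ⟨s, h⟩ with r | r
      · exact ⟨r, rfl⟩
      · exact absurd ⟨h, r, hq⟩ (hmin s hst)
    have ht1 : 1 ≤ t := by
      by_contra hcon
      have ht0 : t = 0 := by omega
      have : q ⟨t, htlt⟩ = .inl a.q0 := by
        rw [show (⟨t, htlt⟩ : Fin ((k - i) / 2 + 1)) = 0 from Fin.ext (by simp [ht0])]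
        exact h0
      rw [this] at hqt
      simp at hqt
    have htm : t ≤ (k - i) / 2 := by omega
    -- decompose the crossing step
    have hc : t - 1 < (k - i) / 2 := by omega
    have hstep := ht ⟨t - 1, hc⟩
    obtain ⟨ra, hqa⟩ := hinl (t - 1) (by omega) (by omega)
    have ecs : ((⟨t - 1, hc⟩ : Fin ((k - i) / 2)).castSucc) =
        (⟨t - 1, by omega⟩ : Fin ((k - i) / 2 + 1)) := Fin.ext (by simp)
    have esc : ((⟨t - 1, hc⟩ : Fin ((k - i) / 2)).succ) = (⟨t, htlt⟩ : Fin ((k - i) / 2 + 1)) :=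
      Fin.ext (by simp; omega)
    rw [ecs, hqa] at hstep
    rcases tauReach_seq_inl hstep with ⟨r', hr', _⟩ | ⟨r', X1, X2, hr', hX, hXa, hXb⟩
    · rw [esc, hqt] at hr'
      simp at hr'
    · rw [esc, hqt] at hr'
      obtain rfl : rt = r' := Sum.inr.inj hr'
      have hX' : X (⟨t - 1, by omega⟩ : Fin ((k - i) / 2 + 1)) = X1 ∪ X2 := ecs ▸ hX
      -- all states from t on are in the second component
      have hinr : ∀ s, ∀ h : t + s < (k - i) / 2 + 1, ∃ r, q ⟨t + s, h⟩ = .inr r := by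
        intro s
        induction s with
        | zero =>
          intro h
          exact ⟨rt, by
            rw [show (⟨t + 0, h⟩ : Fin ((k - i) / 2 + 1)) = ⟨t, htlt⟩ from Fin.ext (by simp)]
            exact hqt⟩
        | succ s ih =>
          intro h
          have hb1 : t + s < (k - i) / 2 + 1 := by omega
          have hb2 : t + s < (k - i) / 2 := by omega
          obtain ⟨r, hr⟩ := ih hb1
          have hst := ht ⟨t + s, hb2⟩
          rw [show ((⟨t + s, hb2⟩ : Fin ((k - i) / 2)).castSucc) =
            (⟨t + s, hb1⟩ : Fin ((k - i) / 2 + 1)) from Fin.ext (by simp), hr] at hst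
          obtain ⟨r2, hr2, _⟩ := tauReach_seq_inr hst
          refine ⟨r2, ?_⟩
          rw [show (⟨t + (s + 1), h⟩ : Fin ((k - i) / 2 + 1)) =
            ((⟨t + s, hb2⟩ : Fin ((k - i) / 2)).succ) from Fin.ext (by simp; omega)]
          exact hr2
      obtain ⟨j, hje, hij', hjk', hj1, hj2, hj3⟩ :
          ∃ j, j % 2 = 0 ∧ i ≤ j ∧ j ≤ k ∧ (j - i) / 2 = t - 1 ∧
            (k - j) / 2 = (k - i) / 2 - (t - 1) ∧ j / 2 = i / 2 + (t - 1) :=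
        ⟨i + 2 * (t - 1), by omega, by omega, by omega, by omega, by omega, by omega⟩
      refine ⟨j, Nat.even_iff.mpr hje, hij', hjk', ?_, ?_⟩
      · -- witness for a on (i, i + 2*(t-1))
        refine ⟨fun l => Sum.elim id (fun _ => a.q0) (q ⟨(l : ℕ), by have := l.isLt; omega⟩),
          fun l => if (l : ℕ) = t - 1 then X1
            else X ⟨(l : ℕ), by have := l.isLt; omega⟩, ?_, ?_, ?_, ?_⟩
        all_goals beta_reduce
        · rw [show (⟨((0 : Fin ((j - i) / 2 + 1)) : ℕ), by omega⟩ :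
            Fin ((k - i) / 2 + 1)) = 0 from Fin.ext (by simp), h0]
          rfl
        · rw [if_pos (by simp only [Fin.val_last]; omega)]
          rw [show (⟨((Fin.last ((j - i) / 2) : Fin _) : ℕ), by omega⟩ :
            Fin ((k - i) / 2 + 1)) = ⟨t - 1, by omega⟩ from
            Fin.ext (by simp only [Fin.val_last]; omega), hqa]
          exact hXa
        · intro l
          have hlt : (l : ℕ) < t - 1 := by have := l.isLt; omega
          obtain ⟨r1, h1⟩ := hinl (l : ℕ) (by omega) (by omega)
          obtain ⟨r2, h2⟩ := hinl ((l : ℕ) + 1) (by omega) (by omega)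
          have hbound : (l : ℕ) < (k - i) / 2 := by omega
          have hstep2 := ht ⟨(l : ℕ), hbound⟩
          rw [show ((⟨(l : ℕ), hbound⟩ : Fin ((k - i) / 2)).castSucc) =
            (⟨(l : ℕ), by omega⟩ : Fin ((k - i) / 2 + 1)) from Fin.ext (by simp), h1] at hstep2
          have hdec := tauReach_seq_inl hstep2
          cases hdec with
          | inl h => ?_
          | inr h => ?_
          · obtain ⟨r', hr', htaua⟩ := h
            rw [show ((⟨(l : ℕ), hbound⟩ : Fin ((k - i) / 2)).succ) =
              (⟨(l : ℕ) + 1, by omega⟩ : Fin ((k - i) / 2 + 1)) from Fin.ext (by simp),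
              h2] at hr'
            rw [if_neg (by simp only [Fin.coe_castSucc]; omega)]
            rw [show (⟨((l.castSucc : Fin _) : ℕ), by have := l.isLt; omega⟩ :
              Fin ((k - i) / 2 + 1)) = ⟨(l : ℕ), by omega⟩ from Fin.ext (by simp), h1]
            rw [show (⟨((l.succ : Fin _) : ℕ), by have := l.isLt; omega⟩ :
              Fin ((k - i) / 2 + 1)) = ⟨(l : ℕ) + 1, by omega⟩ from Fin.ext (by simp), h2]
            exact htaua.congr rfl rfl (congrArg X (Fin.ext (by simp)))
              (Sum.inl.inj hr').symm
          · obtain ⟨r', _, _, hr', _⟩ := h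
            rw [show ((⟨(l : ℕ), hbound⟩ : Fin ((k - i) / 2)).succ) =
              (⟨(l : ℕ) + 1, by omega⟩ : Fin ((k - i) / 2 + 1)) from Fin.ext (by simp),
              h2] at hr'
            simp at hr'
        · intro l ψ hψ
          by_cases hcl : (l : ℕ) = t - 1
          · rw [if_pos hcl] at hψ
            have := hs ⟨t - 1, by omega⟩ ψ (by rw [hX']; exact Or.inl hψ)
            rw [show i / 2 + (l : ℕ) = i / 2 +
              ((⟨t - 1, by omega⟩ : Fin ((k - i) / 2 + 1)) : ℕ) from by
                simp only [Fin.val_mk]; omega]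
            exact this
          · rw [if_neg hcl] at hψ
            exact hs ⟨(l : ℕ), by have := l.isLt; omega⟩ ψ hψ
      · -- witness for b on (i + 2*(t-1), k)
        refine ⟨fun l => if (l : ℕ) = 0 then b.q0
            else Sum.elim (fun _ => b.q0) id (q ⟨t - 1 + (l : ℕ), by have := l.isLt; omega⟩),
          fun l => if (l : ℕ) = 0 then X2
            else X ⟨t - 1 + (l : ℕ), by have := l.isLt; omega⟩, ?_, ?_, ?_, ?_⟩
        all_goals beta_reduce
        · rw [if_pos (by simp)]
        · rw [if_neg (by simp only [Fin.val_last]; omega),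
            if_neg (by simp only [Fin.val_last]; omega)]
          obtain ⟨r, hr⟩ := hinr ((k - i) / 2 - t) (by omega)
          have hlast : (⟨t + ((k - i) / 2 - t), by omega⟩ : Fin ((k - i) / 2 + 1)) =
              Fin.last ((k - i) / 2) := Fin.ext (by simp only [Fin.val_last, Fin.val_mk]; omega)
          rw [hlast] at hr
          rw [hr] at hf
          obtain ⟨r', hr', heps⟩ := epsReach_seq_inr hf
          obtain rfl : b.qf = r' := Sum.inr.inj hr'
          rw [show (⟨t - 1 + ((Fin.last ((k - j) / 2) : Fin _) : ℕ), by omega⟩ :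
            Fin ((k - i) / 2 + 1)) = Fin.last ((k - i) / 2) from
            Fin.ext (by simp only [Fin.val_last, Fin.val_mk]; omega), hr]
          refine heps.congr rfl ?_ rfl
          exact congrArg X (Fin.ext (by simp only [Fin.val_last, Fin.val_mk] <;> omega)).symm
        · intro l
          by_cases hcl : (l : ℕ) = 0
          · rw [if_pos (by simp only [Fin.coe_castSucc]; omega),
              if_pos (by simp only [Fin.coe_castSucc]; omega),
              if_neg (by simp only [Fin.val_succ]; omega)]
            rw [show (⟨t - 1 + ((l.succ : Fin _) : ℕ), by have := l.isLt; omega⟩ :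
              Fin ((k - i) / 2 + 1)) = ⟨t, htlt⟩ from
              Fin.ext (by simp only [Fin.val_succ, Fin.val_mk]; omega), hqt]
            refine hXb.congr rfl ?_ rfl rfl
            have : i / 2 + ((⟨t - 1, hc⟩ : Fin ((k - i) / 2)) : ℕ) =
                j / 2 + (l : ℕ) := by simp only [Fin.val_mk]; omega
            rw [this]
          · rw [if_neg (by simp only [Fin.coe_castSucc]; omega),
              if_neg (by simp only [Fin.coe_castSucc]; omega),
              if_neg (by simp only [Fin.val_succ]; omega)]
            have hcc : t - 1 + (l : ℕ) < (k - i) / 2 := by have := l.isLt; omega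
            obtain ⟨r1, hr1⟩ := hinr ((l : ℕ) - 1) (by omega)
            obtain ⟨r2, hr2⟩ := hinr (l : ℕ) (by have := l.isLt; omega)
            have hstep2 := ht ⟨t - 1 + (l : ℕ), hcc⟩
            rw [show ((⟨t - 1 + (l : ℕ), hcc⟩ : Fin ((k - i) / 2)).castSucc) =
              (⟨t + ((l : ℕ) - 1), by omega⟩ : Fin ((k - i) / 2 + 1)) from
              Fin.ext (by simp only [Fin.coe_castSucc, Fin.val_mk]; omega), hr1] at hstep2
            obtain ⟨r2', hr2', htaub⟩ := tauReach_seq_inr hstep2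
            rw [show ((⟨t - 1 + (l : ℕ), hcc⟩ : Fin ((k - i) / 2)).succ) =
              (⟨t + (l : ℕ), by have := l.isLt; omega⟩ : Fin ((k - i) / 2 + 1)) from
              Fin.ext (by simp only [Fin.val_succ, Fin.val_mk]; omega), hr2] at hr2'
            obtain rfl : r2 = r2' := Sum.inr.inj hr2'
            rw [show (⟨t - 1 + ((l.castSucc : Fin _) : ℕ), by have := l.isLt; omega⟩ :
              Fin ((k - i) / 2 + 1)) = ⟨t + ((l : ℕ) - 1), by omega⟩ from
              Fin.ext (by simp only [Fin.coe_castSucc, Fin.val_mk]; omega), hr1]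
            rw [show (⟨t - 1 + ((l.succ : Fin _) : ℕ), by have := l.isLt; omega⟩ :
              Fin ((k - i) / 2 + 1)) = ⟨t + (l : ℕ), by have := l.isLt; omega⟩ from
              Fin.ext (by simp only [Fin.val_succ, Fin.val_mk]; omega), hr2]
            refine htaub.congr rfl ?_ ?_ rfl
            · have : i / 2 + ((⟨t - 1 + (l : ℕ), hcc⟩ : Fin ((k - i) / 2)) : ℕ) =
                  j / 2 + (l : ℕ) := by simp only [Fin.val_mk]; omega
              rw [this]
            · refine congrArg X (Fin.ext ?_)
              simp only [Fin.coe_castSucc, Fin.val_mk] <;> omega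
        · intro l ψ hψ
          by_cases hcl : (l : ℕ) = 0
          · rw [if_pos hcl] at hψ
            have := hs ⟨t - 1, by omega⟩ ψ (by rw [hX']; exact Or.inr hψ)
            rw [show j / 2 + (l : ℕ) = i / 2 +
              ((⟨t - 1, by omega⟩ : Fin ((k - i) / 2 + 1)) : ℕ) from by
                simp only [Fin.val_mk]; omega]
            exact this
          · rw [if_neg hcl] at hψ
            have := hs ⟨t - 1 + (l : ℕ), by have := l.isLt; omega⟩ ψ hψ
            rw [show j / 2 + (l : ℕ) = i / 2 +
              ((⟨t - 1 + (l : ℕ), by have := l.isLt; omega⟩ :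
                Fin ((k - i) / 2 + 1)) : ℕ) from by simp only [Fin.val_mk]; omega]
            exact this
  · -- the whole sequence stays in the first component: split at j = k
    have hall : ∀ l : Fin ((k - i) / 2 + 1), ∃ r, q l = .inl r := by
      intro l
      rcases hq : q l with r | r
      · exact ⟨r, rfl⟩
      · exact absurd ⟨l.1, l.2, r, by rw [Fin.eta]; exact hq⟩ hex
    obtain ⟨ra, hra⟩ := hall (Fin.last _)
    rw [hra] at hf
    rcases epsReach_seq_inl hf with ⟨r, hr, _⟩ | ⟨r, X1, X2, hr, hX, hXa, hXb⟩
    · exact absurd hr (by simp [Prog.qf])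
    · obtain rfl : b.qf = r := Sum.inr.inj hr
      refine ⟨k, hk, hik, le_refl k, ?_, ?_⟩
      · refine ⟨fun l => Sum.elim id (fun _ => a.q0) (q l),
          fun l => if l = Fin.last _ then X1 else X l, ?_, ?_, ?_, ?_⟩
        all_goals beta_reduce
        · rw [h0]
          rfl
        · rw [if_pos rfl, hra]
          exact hXa
        · intro l
          obtain ⟨r1, h1⟩ := hall l.castSucc
          obtain ⟨r2, h2⟩ := hall l.succ
          have hstep := ht l
          rw [h1] at hstep
          rcases tauReach_seq_inl hstep with ⟨r', hr', htaua⟩ | ⟨r', _, _, hr', _⟩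
          · rw [h2] at hr'
            obtain rfl : r2 = r' := Sum.inl.inj hr'
            rw [h1, h2, if_neg (Fin.ne_of_lt (Fin.castSucc_lt_last l))]
            exact htaua
          · rw [h2] at hr'
            simp at hr'
        · intro l ψ hψ
          by_cases hcl : l = Fin.last _
          · rw [if_pos hcl] at hψ
            subst hcl
            exact hs _ ψ (by rw [hX]; exact Or.inl hψ)
          · rw [if_neg hcl] at hψ
            exact hs l ψ hψ
      · refine ⟨fun _ => b.q0, fun _ => X2, rfl, hXb, ?_, ?_⟩
        · intro l
          exact absurd l.isLt (by omega)
        · intro l ψ hψ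
          have := hs (Fin.last _) ψ (by rw [hX]; exact Or.inr hψ)
          rw [show k / 2 + (l : ℕ) = i / 2 + ((Fin.last ((k - i) / 2) : Fin _) : ℕ) from by
            simp only [Fin.val_last]; have := l.isLt; omega]
          exact this

/-- **Concatenation case of Lemma 2**: witnessing state sequences for `α₁` on `(i, j)`
and for `α₂` on `(j, k)` can be glued along the fresh ε-edge from `q_{f,1}` to `q_{0,2}`
into a witnessing state sequence for `α₁ · α₂` on `(i, k)`; conversely, every witnessing
sequence for `α₁ · α₂` on `(i, k)` splits at some even intermediate index `j` into
witnessing sequences for `α₁` on `(i, j)` and for `α₂` on `(j, k)`. -/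
theorem witness_seq {S P F : Type} {n : ℕ}
    (sat : F → (Fin n → HPath S P) → Prop) (a b : Prog P F n)
    (Pa : Fin n → HPath S P) (i k : ℕ) (hi : Even i) (hk : Even k) (hik : i ≤ k) :
    (∀ j, Even j → i ≤ j → j ≤ k →
      Witness sat a Pa i j → Witness sat b Pa j k → Witness sat (a.seq b) Pa i k) ∧
    (Witness sat (a.seq b) Pa i k →
      ∃ j, Even j ∧ i ≤ j ∧ j ≤ k ∧ Witness sat a Pa i j ∧ Witness sat b Pa j k) :=
  ⟨fun j hj hij hjk wa wb => witness_seq_fwd sat a b Pa i k hi hk hik j hj hij hjk wa wb,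
   witness_seq_bwd sat a b Pa i k hi hk hik⟩
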